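/- Let B ∈ ℂ^{p×n} have full row rank, let B† = Bᴴ(BBᴴ)^{-1}, let x̂ ∈ ℂ^n, and let y ∈ ℝ^p be given by y_r = |(B x̂)_r|². For x_l ∈ ℂ^n and a vector u ∈ ℂ^p with |u_r| = 1 for all r, define x^u = x_l + B†(√y ⊙ u − B x_l). Then for any two such unimodular vectors u and v, ‖x^u − x^v‖₂ ≤ ‖B†‖ · ‖B‖ · (max_r |u_r − v_r|) · ‖x̂‖₂, where ‖B‖ and ‖B†‖ denote operator (spectral) norms; since ‖B‖ = σ_max(B) and ‖B†‖ = 1/σ_min(B), this bound is κ(B) · max_r|u_r − v_r| · ‖x̂‖₂ with κ(B) = σ_max(B)/σ_min(B). (Projection error analysis of the block Kaczmarz phase heuristic.) -/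

import Mathlib

open scoped BigOperators ComplexConjugate

/-- phase(w) = w/|w| if w ≠ 0, else 1. -/
noncomputable def phase (w : ℂ) : ℂ := if w = 0 then 1 else w / ‖w‖

/-- Euclidean norm of a complex vector. -/
noncomputable def evnorm {ι : Type*} [Fintype ι] (v : ι → ℂ) : ℝ :=
  Real.sqrt (∑ i, ‖v i‖ ^ 2)

/-- Euclidean norm of a real vector. -/
noncomputable def rvnorm {ι : Type*} [Fintype ι] (v : ι → ℝ) : ℝ :=
  Real.sqrt (∑ i, (v i) ^ 2)

/-- Standard Hermitian inner product, conjugate-linear in the first argument. -/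
noncomputable def hinner {n : ℕ} (a x : Fin n → ℂ) : ℂ := ∑ i, conj (a i) * x i

/-- dist(x, x̂) = min over unimodular ω of ‖x − ω·x̂‖₂. -/
noncomputable def pdist {n : ℕ} (x xhat : Fin n → ℂ) : ℝ :=
  ⨅ ω : {ω : ℂ // ‖ω‖ = 1}, evnorm (x - (ω : ℂ) • xhat)

/-- Operator (spectral) norm of a complex matrix w.r.t. Euclidean norms. -/
noncomputable def matOpNorm {ι κ : Type*} [Fintype ι] [Fintype κ] [DecidableEq κ]
    (M : Matrix ι κ ℂ) : ℝ :=
  ‖LinearMap.toContinuousLinearMap (Matrix.toEuclideanLin M)‖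

/-! The common affine part `x_l - B† B x_l` cancels, so `x^u - x^v = B† (√y ⊙ (u - v))`. Bound
this by `‖B†‖ · max_r |u_r - v_r| · ‖√y‖₂`, and `‖√y‖₂ = ‖B x̂‖₂ ≤ ‖B‖ ‖x̂‖₂` because
`√y_r = |(B x̂)_r|`. -/

open Matrix

section EuclideanNorm

variable {ι : Type*} [Fintype ι]

lemma evnorm_eq_norm_toLp (v : ι → ℂ) : evnorm v = ‖WithLp.toLp 2 v‖ := by
  simp [evnorm, EuclideanSpace.norm_eq]

lemma evnorm_congr_norm {a b : ι → ℂ} (h : ∀ i, ‖a i‖ = ‖b i‖) : evnorm a = evnorm b := by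
  simp only [evnorm, h]

lemma evnorm_mulVec_le {κ : Type*} [Fintype κ] [DecidableEq κ] (M : Matrix ι κ ℂ)
    (w : κ → ℂ) : evnorm (M *ᵥ w) ≤ matOpNorm M * evnorm w := by
  rw [evnorm_eq_norm_toLp, evnorm_eq_norm_toLp]
  exact (LinearMap.toContinuousLinearMap (toEuclideanLin M)).le_opNorm (WithLp.toLp 2 w)

lemma matOpNorm_nonneg {κ : Type*} [Fintype κ] [DecidableEq κ] (M : Matrix ι κ ℂ) :
    0 ≤ matOpNorm M :=
  norm_nonneg _

lemma evnorm_mul_le_iSup_norm_mul (c w : ι → ℂ) :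
    evnorm (fun i => c i * w i) ≤ (⨆ i, ‖c i‖) * evnorm w := by
  set C := ⨆ i, ‖c i‖
  have hC : 0 ≤ C := Real.iSup_nonneg fun i => norm_nonneg (c i)
  rw [evnorm, evnorm, ← Real.sqrt_sq hC, ← Real.sqrt_mul (sq_nonneg C), Finset.mul_sum]
  gcongr with i
  rw [norm_mul, mul_pow]
  gcongr
  exact le_ciSup (f := fun i => ‖c i‖) (Finite.bddAbove_range _) i

end EuclideanNorm

theorem stmt7_general {p n : ℕ} (B : Matrix (Fin p) (Fin n) ℂ)
    (Bpinv : Matrix (Fin n) (Fin p) ℂ)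
    (xhat : Fin n → ℂ) (y : Fin p → ℝ)
    (hy : ∀ r, y r = ‖B.mulVec xhat r‖ ^ 2)
    (xl : Fin n → ℂ) (u v : Fin p → ℂ) :
    evnorm ((xl + Bpinv.mulVec (fun r => (Real.sqrt (y r) : ℂ) * u r - B.mulVec xl r)) -
        (xl + Bpinv.mulVec (fun r => (Real.sqrt (y r) : ℂ) * v r - B.mulVec xl r))) ≤
      matOpNorm Bpinv * matOpNorm B * (⨆ r, ‖u r - v r‖) * evnorm xhat := by
  set s : Fin p → ℂ := fun r => (Real.sqrt (y r) : ℂ)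
  have hdiff : (xl + Bpinv *ᵥ (fun r => s r * u r - (B *ᵥ xl) r)) -
      (xl + Bpinv *ᵥ (fun r => s r * v r - (B *ᵥ xl) r)) =
      Bpinv *ᵥ fun r => (u r - v r) * s r := by
    rw [add_sub_add_left_eq_sub, ← mulVec_sub]
    congr 1
    ext r
    simp only [Pi.sub_apply]
    ring
  have hs : evnorm s = evnorm (B *ᵥ xhat) := evnorm_congr_norm fun r => by
    simp [s, hy r, Real.sqrt_sq (norm_nonneg _)]
  have hP : 0 ≤ matOpNorm Bpinv := matOpNorm_nonneg Bpinv
  have hC : 0 ≤ ⨆ r, ‖u r - v r‖ := Real.iSup_nonneg fun r => norm_nonneg _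
  rw [hdiff]
  calc evnorm (Bpinv *ᵥ fun r => (u r - v r) * s r)
      ≤ matOpNorm Bpinv * ((⨆ r, ‖u r - v r‖) * evnorm s) := by
        grw [evnorm_mulVec_le, evnorm_mul_le_iSup_norm_mul]
    _ ≤ matOpNorm Bpinv * ((⨆ r, ‖u r - v r‖) * (matOpNorm B * evnorm xhat)) := by
        grw [hs, evnorm_mulVec_le B xhat]
    _ = matOpNorm Bpinv * matOpNorm B * (⨆ r, ‖u r - v r‖) * evnorm xhat := by ring

/-- Projection error analysis of the block Kaczmarz phase heuristic. -/
theorem stmt7 {p n : ℕ} (B : Matrix (Fin p) (Fin n) ℂ)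
    (hB : IsUnit (B * B.conjTranspose))
    (Bpinv : Matrix (Fin n) (Fin p) ℂ)
    (hBpinv : Bpinv = B.conjTranspose * (B * B.conjTranspose)⁻¹)
    (xhat : Fin n → ℂ) (y : Fin p → ℝ)
    (hy : ∀ r, y r = ‖B.mulVec xhat r‖ ^ 2)
    (xl : Fin n → ℂ) (u v : Fin p → ℂ)
    (hu : ∀ r, ‖u r‖ = 1) (hv : ∀ r, ‖v r‖ = 1) :
    evnorm ((xl + Bpinv.mulVec (fun r => (Real.sqrt (y r) : ℂ) * u r - B.mulVec xl r)) -
        (xl + Bpinv.mulVec (fun r => (Real.sqrt (y r) : ℂ) * v r - B.mulVec xl r))) ≤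
      matOpNorm Bpinv * matOpNorm B * (⨆ r, ‖u r - v r‖) * evnorm xhat :=
  stmt7_general B Bpinv xhat y hy xl u v
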